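/- arXiv:1411.7564 — 3 statements merged into one kernel-verified Lean document; each statement's English description precedes it below -/
import Mathlib

section
/- Let n ≥ 1, let A be a symmetric real n×n matrix, and let P be a subset of the space of real n×n matrices. Define p(X) = ⟨A, X⟩ and p_γ(X) = ⟨A, X⟩ + (1/(2γ))‖X‖²_F for γ > 0. If 0 < γ₁ < γ₂, X₁ is a minimizer of p_{γ₁} over P, and X₂ is a minimizer of p_{γ₂} over P, then p(X₁) ≥ p(X₂). (Proposition 1(ii)) -/
/-! Testing the minimality of `x` (for `f + a g`) at `y` and of `y` (for `f + b g`) at `x`, and adding,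
gives `(a - b) (g x - g y) ≤ 0`: a heavier penalty `a > b` yields a minimizer with a smaller
penalty `g`, hence (for `b ≥ 0`) a larger objective `f`.
Here `f = p`, `g = ‖·‖²_F`, and `a = 1/(2γ₁) > b = 1/(2γ₂)`. -/

open Matrix

/-- Frobenius (trace) inner product of two real `n × n` matrices. -/
noncomputable def frobInner {n : ℕ} (A B : Matrix (Fin n) (Fin n) ℝ) : ℝ :=
  (Aᵀ * B).trace

/-- Squared Frobenius norm of a real `n × n` matrix. -/
noncomputable def frobNormSq {n : ℕ} (X : Matrix (Fin n) (Fin n) ℝ) : ℝ :=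
  (Xᵀ * X).trace

section PenalizedMinimizers

variable {α : Type*} {f g : α → ℝ} {s : Set α} {a b : ℝ} {x y : α}

theorem penalty_le_of_isMinOn_add_mul_of_lt (hba : b < a)
    (hx : IsMinOn (fun z => f z + a * g z) s x) (hy : IsMinOn (fun z => f z + b * g z) s y)
    (hxs : x ∈ s) (hys : y ∈ s) : g x ≤ g y := by
  have hxy : f x + a * g x ≤ f y + a * g y := hx hys
  have hyx : f y + b * g y ≤ f x + b * g x := hy hxs
  nlinarith

theorem objective_le_of_isMinOn_add_mul_of_lt (hb : 0 ≤ b) (hba : b < a)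
    (hx : IsMinOn (fun z => f z + a * g z) s x) (hy : IsMinOn (fun z => f z + b * g z) s y)
    (hxs : x ∈ s) (hys : y ∈ s) : f y ≤ f x := by
  have hg : g x ≤ g y := penalty_le_of_isMinOn_add_mul_of_lt hba hx hy hxs hys
  have hyx : f y + b * g y ≤ f x + b * g x := hy hxs
  nlinarith [mul_le_mul_of_nonneg_left hg hb]

end PenalizedMinimizers

theorem stmt_1_general (n : ℕ) (A : Matrix (Fin n) (Fin n) ℝ)
    (P : Set (Matrix (Fin n) (Fin n) ℝ)) (γ₁ γ₂ : ℝ) (hγ₁ : 0 < γ₁) (hγ₁₂ : γ₁ < γ₂)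
    (X₁ X₂ : Matrix (Fin n) (Fin n) ℝ) (hX₁ : X₁ ∈ P) (hX₂ : X₂ ∈ P)
    (hmin₁ : ∀ Y ∈ P, frobInner A X₁ + (1 / (2 * γ₁)) * frobNormSq X₁ ≤
        frobInner A Y + (1 / (2 * γ₁)) * frobNormSq Y)
    (hmin₂ : ∀ Y ∈ P, frobInner A X₂ + (1 / (2 * γ₂)) * frobNormSq X₂ ≤
        frobInner A Y + (1 / (2 * γ₂)) * frobNormSq Y) :
    frobInner A X₂ ≤ frobInner A X₁ := by
  have hγ₂ : 0 < γ₂ := hγ₁.trans hγ₁₂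
  exact objective_le_of_isMinOn_add_mul_of_lt (by positivity) (by gcongr)
    (isMinOn_iff.2 hmin₁) (isMinOn_iff.2 hmin₂) hX₁ hX₂

/-- Proposition 1(ii): for `0 < γ₁ < γ₂`, minimizers `X₁` of `p_{γ₁}` and `X₂` of
`p_{γ₂}` over `P` satisfy `p(X₁) ≥ p(X₂)`. -/
theorem stmt_1 (n : ℕ) (hn : 1 ≤ n) (A : Matrix (Fin n) (Fin n) ℝ) (hA : A.IsSymm)
    (P : Set (Matrix (Fin n) (Fin n) ℝ)) (γ₁ γ₂ : ℝ) (hγ₁ : 0 < γ₁) (hγ₁₂ : γ₁ < γ₂)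
    (X₁ X₂ : Matrix (Fin n) (Fin n) ℝ) (hX₁ : X₁ ∈ P) (hX₂ : X₂ ∈ P)
    (hmin₁ : ∀ Y ∈ P, frobInner A X₁ + (1 / (2 * γ₁)) * frobNormSq X₁ ≤
        frobInner A Y + (1 / (2 * γ₁)) * frobNormSq Y)
    (hmin₂ : ∀ Y ∈ P, frobInner A X₂ + (1 / (2 * γ₂)) * frobNormSq X₂ ≤
        frobInner A Y + (1 / (2 * γ₂)) * frobNormSq Y) :
    frobInner A X₂ ≤ frobInner A X₁ :=
  stmt_1_general n A P γ₁ γ₂ hγ₁ hγ₁₂ X₁ X₂ hX₁ hX₂ hmin₁ hmin₂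
end

section
/- Let C be a symmetric real n×n matrix, and let Π denote the metric projection onto the cone of positive semidefinite matrices (in Frobenius norm). Then the minimum of ‖Z + C‖²_F over all positive semidefinite matrices Z equals ‖Π(C)‖²_F, and it is attained at Z = Π(−C); that is, Π(−C) + C = Π(C) and ‖Z + C‖²_F ≥ ‖Π(C)‖²_F for every positive semidefinite Z. -/
open Matrix

/-- Frobenius norm of a real `n × n` matrix. -/
noncomputable def frobNorm {n : ℕ} (X : Matrix (Fin n) (Fin n) ℝ) : ℝ :=
  Real.sqrt (frobNormSq X)

/-- `proj` is the metric projection onto the PSD cone: for every symmetric `X`,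
`proj X` is PSD and is nearest to `X` in Frobenius norm among all PSD matrices. -/
def IsPSDProjection {n : ℕ}
    (proj : Matrix (Fin n) (Fin n) ℝ → Matrix (Fin n) (Fin n) ℝ) : Prop :=
  ∀ X : Matrix (Fin n) (Fin n) ℝ, X.IsSymm →
    (proj X).PosSemidef ∧
      ∀ Y : Matrix (Fin n) (Fin n) ℝ, Y.PosSemidef →
        frobNorm (proj X - X) ≤ frobNorm (Y - X)

/-!
The nearest point `P` of a convex cone `K` to `C` is characterised by `⟪C - P, P⟫ = 0` and
`⟪C - P, W⟫ ≤ 0` for all `W ∈ K`. For the PSD cone, testing the second condition against the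
rank-one matrices `x xᵀ` shows that `P - C` is PSD; as `⟪P, W⟫ ≥ 0` for PSD `W`, the matrix
`P - C` then satisfies the variational inequality of the nearest point of the cone to `-C`, and
nearest points are unique, so `Π(-C) = P - C`. The inequality is the minimality of `Π(-C)`
shifted by `C`.
-/

open scoped InnerProductSpace

section ConeProjection

variable {F : Type*} [NormedAddCommGroup F] [InnerProductSpace ℝ F]

theorem Convex.real_inner_sub_sub_nonpos_of_isMinOn {K : Set F} (hK : Convex ℝ K) {u v : F}
    (hv : v ∈ K) (hmin : IsMinOn (fun w => ‖u - w‖) K v) {w : F} (hw : w ∈ K) :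
    ⟪u - v, w - v⟫_ℝ ≤ 0 :=
  (norm_eq_iInf_iff_real_inner_le_zero hK hv).1 (hmin.iInf_eq hv).symm w hw

theorem eq_of_real_inner_sub_sub_nonpos {u v v' : F} (h : ⟪u - v, v' - v⟫_ℝ ≤ 0)
    (h' : ⟪u - v', v - v'⟫_ℝ ≤ 0) : v = v' := by
  have hsq : ‖v - v'‖ ^ 2 = ⟪u - v', v - v'⟫_ℝ + ⟪u - v, v' - v⟫_ℝ := by
    rw [← real_inner_self_eq_norm_sq]
    simp only [inner_sub_left, inner_sub_right, real_inner_comm v v']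
    ring
  have hnonpos : ‖v - v'‖ ^ 2 ≤ 0 := by linarith
  simpa [sub_eq_zero] using hnonpos

namespace PointedCone

variable (K : PointedCone ℝ F) {u v : F}

theorem real_inner_sub_self_eq_zero_of_isMinOn (hv : v ∈ K)
    (hmin : IsMinOn (fun w => ‖u - w‖) K v) : ⟪u - v, v⟫_ℝ = 0 := by
  have h0 := K.convex.real_inner_sub_sub_nonpos_of_isMinOn hv hmin K.zero_mem
  have h2 := K.convex.real_inner_sub_sub_nonpos_of_isMinOn hv hmin (K.smul_mem zero_le_two hv)
  rw [zero_sub, inner_neg_right] at h0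
  rw [two_smul, add_sub_cancel_right] at h2
  linarith

theorem real_inner_sub_nonpos_of_isMinOn (hv : v ∈ K) (hmin : IsMinOn (fun w => ‖u - w‖) K v)
    {w : F} (hw : w ∈ K) : ⟪u - v, w⟫_ℝ ≤ 0 := by
  simpa using K.convex.real_inner_sub_sub_nonpos_of_isMinOn hv hmin (K.add_mem hw hv)

end PointedCone

end ConeProjection

namespace Matrix

def posSemidefCone (ι : Type*) : PointedCone ℝ (Matrix ι ι ℝ) where
  carrier := {A | A.PosSemidef}
  add_mem' := PosSemidef.add
  zero_mem' := PosSemidef.zero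
  smul_mem' c _ hA := hA.smul c.2

variable {ι : Type*} [Fintype ι] [DecidableEq ι]

/-- Mathlib's inner product `⟪X, Y⟫ = trace (Y * M * Xᴴ)` at `M = 1`: the Frobenius one. -/
noncomputable abbrev frobeniusInnerNormedAddCommGroup : NormedAddCommGroup (Matrix ι ι ℝ) :=
  toMatrixNormedAddCommGroup 1 PosDef.one

noncomputable abbrev frobeniusInnerProductSpace :
    letI := frobeniusInnerNormedAddCommGroup (ι := ι); InnerProductSpace ℝ (Matrix ι ι ℝ) :=
  toMatrixInnerProductSpace 1 PosDef.one.posSemidef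

section FrobeniusInner

attribute [local instance] frobeniusInnerNormedAddCommGroup frobeniusInnerProductSpace

theorem frobenius_inner_eq_trace (X Y : Matrix ι ι ℝ) : ⟪X, Y⟫_ℝ = (Xᵀ * Y).trace := by
  change (Y * 1 * Xᴴ).trace = _
  rw [Matrix.mul_one, trace_mul_comm, conjTranspose_eq_transpose_of_trivial]

theorem frobenius_inner_vecMulVec_self (A : Matrix ι ι ℝ) (x : ι → ℝ) :
    ⟪A, vecMulVec x x⟫_ℝ = x ⬝ᵥ A *ᵥ x := by
  rw [frobenius_inner_eq_trace, mul_vecMulVec, trace_vecMulVec, mulVec_transpose,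
    dotProduct_mulVec, dotProduct_comm]

theorem PosSemidef.frobenius_inner_nonneg {A B : Matrix ι ι ℝ} (hA : A.PosSemidef)
    (hB : B.PosSemidef) : 0 ≤ ⟪A, B⟫_ℝ := by
  obtain ⟨m, v, rfl⟩ := posSemidef_iff_eq_sum_vecMulVec.mp hB
  rw [inner_sum]
  refine Finset.sum_nonneg fun i _ => ?_
  simpa [frobenius_inner_vecMulVec_self] using hA.dotProduct_mulVec_nonneg (v i)

theorem posSemidef_of_frobenius_inner_nonneg {A : Matrix ι ι ℝ} (hA : A.IsSymm)
    (h : ∀ B : Matrix ι ι ℝ, B.PosSemidef → 0 ≤ ⟪A, B⟫_ℝ) : A.PosSemidef :=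
  .of_dotProduct_mulVec_nonneg (isHermitian_iff_isSymm.mpr hA) fun x => by
    simpa [frobenius_inner_vecMulVec_self] using h _ (posSemidef_vecMulVec_self_star x)

theorem add_eq_of_isMinOn_posSemidefCone {C P Q : Matrix ι ι ℝ} (hC : C.IsSymm)
    (hP : P.PosSemidef) (hPmin : IsMinOn (fun Y => ‖C - Y‖) (posSemidefCone ι) P)
    (hQ : Q.PosSemidef) (hQmin : IsMinOn (fun Y => ‖-C - Y‖) (posSemidefCone ι) Q) :
    Q + C = P := by
  have hPP : ⟪C - P, P⟫_ℝ = 0 :=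
    (posSemidefCone ι).real_inner_sub_self_eq_zero_of_isMinOn hP hPmin
  have hPC : (P - C).PosSemidef := by
    refine posSemidef_of_frobenius_inner_nonneg ((isHermitian_iff_isSymm.mp hP.1).sub hC)
      fun B hB => ?_
    have hCPB := (posSemidefCone ι).real_inner_sub_nonpos_of_isMinOn hP hPmin (w := B) hB
    rw [← neg_sub, inner_neg_left]
    linarith
  suffices Q = P - C by rw [this, sub_add_cancel]
  refine eq_of_real_inner_sub_sub_nonpos (u := -C)
    ((posSemidefCone ι).convex.real_inner_sub_sub_nonpos_of_isMinOn hQ hQmin hPC) ?_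
  have hPQ := hP.frobenius_inner_nonneg hQ
  rw [show -C - (P - C) = -P by abel, inner_neg_left, inner_sub_right, ← neg_sub C P,
    inner_neg_right, real_inner_comm (C - P), hPP]
  linarith

end FrobeniusInner

end Matrix

section PSDProjection

attribute [local instance] frobeniusInnerNormedAddCommGroup frobeniusInnerProductSpace

variable {n : ℕ} {proj : Matrix (Fin n) (Fin n) ℝ → Matrix (Fin n) (Fin n) ℝ}

theorem frobNormSq_eq_norm_sq (X : Matrix (Fin n) (Fin n) ℝ) : frobNormSq X = ‖X‖ ^ 2 :=
  (frobenius_inner_eq_trace X X).symm.trans (real_inner_self_eq_norm_sq X)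

theorem frobNorm_eq_norm (X : Matrix (Fin n) (Fin n) ℝ) : frobNorm X = ‖X‖ := by
  rw [frobNorm, frobNormSq_eq_norm_sq, Real.sqrt_sq (norm_nonneg X)]

theorem frobNormSq_eq_frobNorm_sq (X : Matrix (Fin n) (Fin n) ℝ) :
    frobNormSq X = frobNorm X ^ 2 := by
  rw [frobNorm_eq_norm, frobNormSq_eq_norm_sq]

theorem IsPSDProjection.isMinOn (hproj : IsPSDProjection proj) {X : Matrix (Fin n) (Fin n) ℝ}
    (hX : X.IsSymm) :
    IsMinOn (fun Y => ‖X - Y‖) (posSemidefCone (Fin n)) (proj X) :=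
  isMinOn_iff.2 fun Y hY => by
    simpa only [norm_sub_rev X, frobNorm_eq_norm] using (hproj X hX).2 Y hY

theorem IsPSDProjection.neg_add_eq (hproj : IsPSDProjection proj)
    {C : Matrix (Fin n) (Fin n) ℝ} (hC : C.IsSymm) : proj (-C) + C = proj C :=
  add_eq_of_isMinOn_posSemidefCone hC (hproj C hC).1 (hproj.isMinOn hC)
    (hproj (-C) hC.neg).1 (hproj.isMinOn hC.neg)

end PSDProjection

/-- The minimum of `‖Z + C‖²_F` over PSD matrices `Z` equals `‖Π(C)‖²_F` and is
attained at `Z = Π(−C)`: that is, `Π(−C) + C = Π(C)` and `‖Z + C‖²_F ≥ ‖Π(C)‖²_F`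
for every PSD `Z`. -/
theorem stmt_5 (n : ℕ)
    (proj : Matrix (Fin n) (Fin n) ℝ → Matrix (Fin n) (Fin n) ℝ)
    (hproj : IsPSDProjection proj)
    (C : Matrix (Fin n) (Fin n) ℝ) (hC : C.IsSymm) :
    proj (-C) + C = proj C ∧
      ∀ Z : Matrix (Fin n) (Fin n) ℝ, Z.PosSemidef →
        frobNormSq (proj C) ≤ frobNormSq (Z + C) := by
  have hmoreau := hproj.neg_add_eq hC
  refine ⟨hmoreau, fun Z hZ => ?_⟩
  have hmin := (hproj (-C) hC.neg).2 Z hZ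
  rw [sub_neg_eq_add, sub_neg_eq_add, hmoreau] at hmin
  rw [frobNormSq_eq_frobNorm_sq, frobNormSq_eq_frobNorm_sq]
  exact pow_le_pow_left₀ (Real.sqrt_nonneg _) hmin 2
end

section
/- Weak duality for the regularized SDP: let A, B_1, …, B_m be symmetric real n×n matrices, b ∈ ℝ^m, γ > 0, and let {1,…,m} be partitioned into index sets I_eq and I_in. Suppose X is a positive semidefinite real n×n matrix satisfying ⟨B_i, X⟩ = b_i for all i ∈ I_eq and ⟨B_i, X⟩ ≤ b_i for all i ∈ I_in, and suppose u ∈ ℝ^m satisfies u_i ≥ 0 for all i ∈ I_in. Then d_γ(u) ≤ ⟨A, X⟩ + (1/(2γ))‖X‖²_F, where d_γ(u) = −uᵀb − (γ/2)‖Π(−A − Σ_{i=1}^m u_i B_i)‖²_F and Π denotes the metric projection onto the PSD cone. -/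
/-
Write `C = C(u)` and `P = Π(C)`. Since the PSD cone is closed under nonnegative scaling, comparing
`‖P - C‖` with `‖s • P - C‖` for all `s ≥ 0` gives `⟨C, P⟩ ≤ ‖P‖²`; comparing it with `‖Z - C‖`
for a PSD `Z` then yields the Fenchel–Young inequality `2⟨C, Z⟩ ≤ ‖P‖² + ‖Z‖²`. With `Z = X / γ`
this reads `⟨C, X⟩ ≤ (γ/2)‖P‖² + (1/(2γ))‖X‖²`, and primal feasibility together with `uᵢ ≥ 0` on
the inequality constraints gives `-⟨C, X⟩ ≤ ⟨A, X⟩ + uᵀb`.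
-/
open Matrix

/-- `C(u) = −A − Σᵢ uᵢ Bᵢ`. -/
noncomputable def Cmat {n m : ℕ} (A : Matrix (Fin n) (Fin n) ℝ)
    (B : Fin m → Matrix (Fin n) (Fin n) ℝ) (u : Fin m → ℝ) :
    Matrix (Fin n) (Fin n) ℝ :=
  -A - ∑ i, u i • B i

/-- `d_γ(u) = −uᵀb − (γ/2)‖Π(C(u))‖²_F`. -/
noncomputable def dualObj {n m : ℕ} (A : Matrix (Fin n) (Fin n) ℝ)
    (B : Fin m → Matrix (Fin n) (Fin n) ℝ) (b : Fin m → ℝ) (γ : ℝ)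
    (proj : Matrix (Fin n) (Fin n) ℝ → Matrix (Fin n) (Fin n) ℝ)
    (u : Fin m → ℝ) : ℝ :=
  -(∑ i, u i * b i) - (γ / 2) * frobNormSq (proj (Cmat A B u))

section Frobenius

variable {n : ℕ}

lemma frobInner_comm (M N : Matrix (Fin n) (Fin n) ℝ) : frobInner M N = frobInner N M := by
  rw [frobInner, frobInner, ← trace_transpose, transpose_mul, transpose_transpose]

lemma frobInner_smul_right (M N : Matrix (Fin n) (Fin n) ℝ) (c : ℝ) :
    frobInner M (c • N) = c * frobInner M N := by
  simp only [frobInner, Matrix.mul_smul, trace_smul, smul_eq_mul]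

lemma frobNormSq_nonneg (M : Matrix (Fin n) (Fin n) ℝ) : 0 ≤ frobNormSq M := by
  simpa [frobNormSq] using (posSemidef_conjTranspose_mul_self M).trace_nonneg

lemma frobNormSq_smul (M : Matrix (Fin n) (Fin n) ℝ) (c : ℝ) :
    frobNormSq (c • M) = c ^ 2 * frobNormSq M := by
  simp only [frobNormSq, transpose_smul, smul_mul, Matrix.mul_smul, trace_smul, smul_eq_mul]
  ring

lemma frobNormSq_sub (Y C : Matrix (Fin n) (Fin n) ℝ) :
    frobNormSq (Y - C) = frobNormSq Y - 2 * frobInner C Y + frobNormSq C := by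
  have hcomm := frobInner_comm Y C
  simp only [frobNormSq, frobInner, transpose_sub, sub_mul, mul_sub, trace_sub] at hcomm ⊢
  linarith

lemma frobNormSq_le_frobNormSq_of_frobNorm_le {M N : Matrix (Fin n) (Fin n) ℝ}
    (h : frobNorm M ≤ frobNorm N) : frobNormSq M ≤ frobNormSq N :=
  (Real.sqrt_le_sqrt_iff (frobNormSq_nonneg N)).mp h

end Frobenius

lemma le_of_forall_nonneg_sq_mul_sub_le {p c : ℝ} (hp : 0 ≤ p)
    (h : ∀ s : ℝ, 0 ≤ s → p - 2 * c ≤ s ^ 2 * p - 2 * s * c) : c ≤ p := by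
  by_contra! hlt
  -- `s ↦ s²p - 2sc` decreases just to the right of `s = 1` when `p < c`.
  set δ := (c - p) / (p + 1)
  have hδ : 0 < δ := div_pos (by linarith) (by linarith)
  have hpδ : p * δ < c - p := by
    rw [mul_div_assoc', div_lt_iff₀ (by linarith)]
    nlinarith
  nlinarith [h (1 + δ) (by linarith)]

namespace IsPSDProjection

variable {n : ℕ} {proj : Matrix (Fin n) (Fin n) ℝ → Matrix (Fin n) (Fin n) ℝ}
  {C : Matrix (Fin n) (Fin n) ℝ}

lemma frobNormSq_sub_frobInner_le (hproj : IsPSDProjection proj) (hC : C.IsSymm)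
    {Y : Matrix (Fin n) (Fin n) ℝ} (hY : Y.PosSemidef) :
    frobNormSq (proj C) - 2 * frobInner C (proj C) ≤ frobNormSq Y - 2 * frobInner C Y := by
  have h := frobNormSq_le_frobNormSq_of_frobNorm_le ((hproj C hC).2 Y hY)
  rw [frobNormSq_sub, frobNormSq_sub] at h
  linarith

lemma frobInner_le_frobNormSq (hproj : IsPSDProjection proj) (hC : C.IsSymm) :
    frobInner C (proj C) ≤ frobNormSq (proj C) := by
  refine le_of_forall_nonneg_sq_mul_sub_le (frobNormSq_nonneg _) fun s hs => ?_
  have h := hproj.frobNormSq_sub_frobInner_le hC ((hproj C hC).1.smul hs)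
  rwa [frobNormSq_smul, frobInner_smul_right, ← mul_assoc] at h

lemma two_mul_frobInner_le (hproj : IsPSDProjection proj) (hC : C.IsSymm)
    {Z : Matrix (Fin n) (Fin n) ℝ} (hZ : Z.PosSemidef) :
    2 * frobInner C Z ≤ frobNormSq (proj C) + frobNormSq Z := by
  linarith [hproj.frobNormSq_sub_frobInner_le hC hZ, hproj.frobInner_le_frobNormSq hC]

lemma frobInner_le (hproj : IsPSDProjection proj) (hC : C.IsSymm)
    {X : Matrix (Fin n) (Fin n) ℝ} (hX : X.PosSemidef) {γ : ℝ} (hγ : 0 < γ) :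
    frobInner C X ≤ γ / 2 * frobNormSq (proj C) + 1 / (2 * γ) * frobNormSq X := by
  have h := hproj.two_mul_frobInner_le hC (hX.smul (inv_nonneg.mpr hγ.le))
  rw [frobInner_smul_right, frobNormSq_smul] at h
  have h' := mul_le_mul_of_nonneg_left h (half_pos hγ).le
  field_simp at h' ⊢
  linarith

end IsPSDProjection

section Cmat

variable {n m : ℕ} {A : Matrix (Fin n) (Fin n) ℝ} {B : Fin m → Matrix (Fin n) (Fin n) ℝ}

lemma Cmat_isSymm (hA : A.IsSymm) (hB : ∀ i, (B i).IsSymm) (u : Fin m → ℝ) :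
    (Cmat A B u).IsSymm :=
  hA.neg.sub <| Finset.sum_induction _ IsSymm (fun _ _ => IsSymm.add) isSymm_zero
    fun i _ => (hB i).smul (u i)

lemma frobInner_Cmat (u : Fin m → ℝ) (X : Matrix (Fin n) (Fin n) ℝ) :
    frobInner (Cmat A B u) X = -frobInner A X - ∑ i, u i * frobInner (B i) X := by
  simp [Cmat, frobInner, transpose_sub, transpose_sum, sub_mul, Finset.sum_mul, trace_sub,
    trace_sum]

end Cmat

lemma sum_mul_le_sum_mul_of_union_eq_univ {ι : Type*} [Fintype ι] {Ieq Iin : Set ι}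
    (hunion : Ieq ∪ Iin = Set.univ) {u a b : ι → ℝ} (heq : ∀ i ∈ Ieq, a i = b i)
    (hin : ∀ i ∈ Iin, a i ≤ b i) (hu : ∀ i ∈ Iin, 0 ≤ u i) :
    ∑ i, u i * a i ≤ ∑ i, u i * b i := by
  refine Finset.sum_le_sum fun i _ => ?_
  rcases (hunion ▸ Set.mem_univ i : i ∈ Ieq ∪ Iin) with hi | hi
  · rw [heq i hi]
  · exact mul_le_mul_of_nonneg_left (hin i hi) (hu i hi)

theorem stmt_9_general (n m : ℕ) (A : Matrix (Fin n) (Fin n) ℝ) (hA : A.IsSymm)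
    (B : Fin m → Matrix (Fin n) (Fin n) ℝ) (hB : ∀ i, (B i).IsSymm)
    (b : Fin m → ℝ) (γ : ℝ) (hγ : 0 < γ)
    (Ieq Iin : Set (Fin m)) (hunion : Ieq ∪ Iin = Set.univ)
    (proj : Matrix (Fin n) (Fin n) ℝ → Matrix (Fin n) (Fin n) ℝ)
    (hproj : IsPSDProjection proj)
    (X : Matrix (Fin n) (Fin n) ℝ) (hXpsd : X.PosSemidef)
    (heq : ∀ i ∈ Ieq, frobInner (B i) X = b i)
    (hin : ∀ i ∈ Iin, frobInner (B i) X ≤ b i)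
    (u : Fin m → ℝ) (hu : ∀ i ∈ Iin, 0 ≤ u i) :
    dualObj A B b γ proj u ≤ frobInner A X + (1 / (2 * γ)) * frobNormSq X := by
  have hFenchelYoung := hproj.frobInner_le (Cmat_isSymm hA hB u) hXpsd hγ
  rw [frobInner_Cmat] at hFenchelYoung
  have hfeasible := sum_mul_le_sum_mul_of_union_eq_univ (a := fun i => frobInner (B i) X)
    hunion heq hin hu
  rw [dualObj]
  linarith

/-- Weak duality for the regularized SDP: if `X` is primal feasible and `u` is dual
feasible, then `d_γ(u) ≤ ⟨A, X⟩ + (1/(2γ))‖X‖²_F`. -/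
theorem stmt_9 (n m : ℕ) (A : Matrix (Fin n) (Fin n) ℝ) (hA : A.IsSymm)
    (B : Fin m → Matrix (Fin n) (Fin n) ℝ) (hB : ∀ i, (B i).IsSymm)
    (b : Fin m → ℝ) (γ : ℝ) (hγ : 0 < γ)
    (Ieq Iin : Set (Fin m)) (hunion : Ieq ∪ Iin = Set.univ) (hdisj : Disjoint Ieq Iin)
    (proj : Matrix (Fin n) (Fin n) ℝ → Matrix (Fin n) (Fin n) ℝ)
    (hproj : IsPSDProjection proj)
    (X : Matrix (Fin n) (Fin n) ℝ) (hXpsd : X.PosSemidef)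
    (heq : ∀ i ∈ Ieq, frobInner (B i) X = b i)
    (hin : ∀ i ∈ Iin, frobInner (B i) X ≤ b i)
    (u : Fin m → ℝ) (hu : ∀ i ∈ Iin, 0 ≤ u i) :
    dualObj A B b γ proj u ≤ frobInner A X + (1 / (2 * γ)) * frobNormSq X :=
  stmt_9_general n m A hA B hB b γ hγ Ieq Iin hunion proj hproj X hXpsd heq hin u hu
end
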